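/- Let M̃ be a tight Ã-lattice, set M := M̃/πM̃ (a module over A := Ã/πÃ), and for n ≥ 0 let Fⁿ·M denote the image of Fⁿ·M̃ in M. Then for every n ≥ 0 the natural surjection (Fⁿ·M̃/Fⁿ⁺¹·M̃) ⊗_O k → Fⁿ·M/Fⁿ⁺¹·M is an isomorphism of k-vector spaces. -/

import Mathlib

set_option linter.unusedSectionVars false
set_option maxHeartbeats 800000

/-!
Context: `O` is a DVR with uniformizer `π`, fraction field `K`, residue field `k = O/(π)`.
`B` plays the role of `Ã_K = K ⊗_O Ã` (finite-dimensional `K`-algebra), `A ⊆ B` the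
`O`-order playing the role of `Ã`, `V` the role of `M̃_K`, and the lattice `M̃` is an
`A`-stable `O`-submodule `L ⊆ V`, finite and free over `O`, spanning `V` over `K`.
`J` is the Jacobson radical of `B`, `rad̃ⁿ M̃ := M̃ ∩ Jⁿ·M̃_K`, `Fⁿ := Ã ∩ Jⁿ`, and `M̃` is
*tight* if `Fⁿ·M̃ = rad̃ⁿ M̃` for all `n`.

STATEMENT: let `M̃` be tight, `M := M̃/πM̃` and let `Fⁿ·M` be the image of `Fⁿ·M̃` in `M`.
Then for every `n ≥ 0` the natural surjection `(Fⁿ·M̃/Fⁿ⁺¹·M̃) ⊗_O k → Fⁿ·M/Fⁿ⁺¹·M` is an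
isomorphism.  Here `(Fⁿ·M̃/Fⁿ⁺¹·M̃) ⊗_O k` is realized, via the canonical isomorphism
`X ⊗_O k ≅ X/πX`, as `Fⁿ·M̃/(Fⁿ⁺¹·M̃ + π·(Fⁿ·M̃))`, and the natural map is induced by
`M̃ → M`.
-/

open Submodule

section

variable (O : Type) [CommRing O] [IsDomain O] [IsDiscreteValuationRing O]
variable (K : Type) [Field K] [Algebra O K] [IsFractionRing O K]
variable (B : Type) [Ring B] [Algebra K B] [Algebra O B] [IsScalarTower O K B]
  [FiniteDimensional K B]
variable (V : Type) [AddCommGroup V] [Module K V] [Module B V] [IsScalarTower K B V]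
  [Module O V] [IsScalarTower O K V] [FiniteDimensional K V]

/-- The `R`-span of the set of products `s • w`, `s ∈ S`, `w ∈ W`. -/
noncomputable def sspan (R : Type) {B' V' : Type} [Semiring R] [AddCommMonoid V'] [Module R V']
    [SMul B' V'] (S : Set B') (W : Set V') : Submodule R V' :=
  Submodule.span R {y : V' | ∃ s ∈ S, ∃ w ∈ W, y = s • w}

/-- The Jacobson radical `J` of `B = Ã_K`, viewed as a `K`-submodule of `B`. -/
noncomputable def JK : Submodule K B :=
  Submodule.restrictScalars K (Ideal.jacobson (⊥ : Ideal B))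

/-- `Jⁿ·M̃_K`, i.e. `Jⁿ·V`. -/
noncomputable def radV (n : ℕ) : Submodule K V :=
  sspan K ((JK K B ^ n : Submodule K B) : Set B) (Set.univ : Set V)

/-- `rad̃ⁿ M̃ := M̃ ∩ Jⁿ·M̃_K`, an `O`-submodule of `V`. -/
noncomputable def radL (L : Submodule O V) (n : ℕ) : Submodule O V :=
  L ⊓ Submodule.restrictScalars O (radV K B V n)

/-- `Fⁿ := Ã ∩ Jⁿ`, an `O`-submodule of `B`. -/
noncomputable def Fn (A : Subalgebra O B) (n : ℕ) : Submodule O B :=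
  A.toSubmodule ⊓ Submodule.restrictScalars O (JK K B ^ n)

/-- `Fⁿ·M̃`, an `O`-submodule of `V`. -/
noncomputable def FnL (A : Subalgebra O B) (L : Submodule O V) (n : ℕ) : Submodule O V :=
  sspan O ((Fn O K B A n : Submodule O B) : Set B) ((L : Submodule O V) : Set V)

theorem FnL_le_radL (A : Subalgebra O B) (L : Submodule O V)
    (hLstab : ∀ a ∈ A, ∀ x ∈ L, a • x ∈ L) (n : ℕ) :
    FnL O K B V A L n ≤ radL O K B V L n := by
  apply Submodule.span_le.mpr
  rintro y ⟨a, ha, x, hx, rfl⟩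
  obtain ⟨ha1, ha2⟩ := Submodule.mem_inf.mp ha
  exact ⟨hLstab a ha1 x hx, Submodule.subset_span ⟨a, ha2, x, trivial, rfl⟩⟩

theorem FnL_le (A : Subalgebra O B) (L : Submodule O V)
    (hLstab : ∀ a ∈ A, ∀ x ∈ L, a • x ∈ L) (n : ℕ) :
    FnL O K B V A L n ≤ L :=
  (FnL_le_radL O K B V A L hLstab n).trans inf_le_left

/-- `π·W`, the image of a submodule `W ⊆ V` under multiplication by `π`. -/
noncomputable def piSMul (π : O) (W : Submodule O V) : Submodule O V :=
  Submodule.map (LinearMap.lsmul O V π) W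

/-- `M := M̃/πM̃`. -/
noncomputable abbrev Mbar (π : O) (L : Submodule O V) : Type :=
  ↥L ⧸ Submodule.comap L.subtype (piSMul O V π L)

/-- `Fⁿ·M`, the image of `Fⁿ·M̃` in `M = M̃/πM̃`. -/
noncomputable def FnM (π : O) (A : Subalgebra O B) (L : Submodule O V) (n : ℕ) :
    Submodule O (Mbar O V π L) :=
  Submodule.map (Submodule.comap L.subtype (piSMul O V π L)).mkQ
    (Submodule.comap L.subtype (FnL O K B V A L n))

/-- The natural map `Fⁿ·M̃ → Fⁿ·M` induced by `M̃ → M`. -/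
noncomputable def psi (π : O) (A : Subalgebra O B) (L : Submodule O V)
    (hLstab : ∀ a ∈ A, ∀ x ∈ L, a • x ∈ L) (n : ℕ) :
    ↥(FnL O K B V A L n) →ₗ[O] ↥(FnM O K B V π A L n) :=
  LinearMap.codRestrict _
    ((Submodule.comap L.subtype (piSMul O V π L)).mkQ.comp
      (Submodule.inclusion (FnL_le O K B V A L hLstab n)))
    (fun x => ⟨Submodule.inclusion (FnL_le O K B V A L hLstab n) x, by simpa using x.2, rfl⟩)

/-- The natural surjection `(Fⁿ·M̃/Fⁿ⁺¹·M̃) ⊗_O k → Fⁿ·M/Fⁿ⁺¹·M`, with the source realized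
as `Fⁿ·M̃/(Fⁿ⁺¹·M̃ + π·Fⁿ·M̃)`. -/
noncomputable def redMap (π : O) (A : Subalgebra O B) (L : Submodule O V)
    (hLstab : ∀ a ∈ A, ∀ x ∈ L, a • x ∈ L) (n : ℕ) :
    (↥(FnL O K B V A L n) ⧸
        (Submodule.comap (FnL O K B V A L n).subtype
          (FnL O K B V A L (n + 1) ⊔ piSMul O V π (FnL O K B V A L n)))) →ₗ[O]
      (↥(FnM O K B V π A L n) ⧸
        (Submodule.comap (FnM O K B V π A L n).subtype (FnM O K B V π A L (n + 1)))) :=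
  Submodule.mapQ _ _ (psi O K B V π A L hLstab n) (by
    intro x hx
    have hx' : (x : V) ∈ FnL O K B V A L (n + 1) ⊔ piSMul O V π (FnL O K B V A L n) := hx
    rw [Submodule.mem_sup] at hx'
    obtain ⟨y, hy, w, hw, hyw⟩ := hx'
    obtain ⟨z, hz, rfl⟩ := hw
    show ((psi O K B V π A L hLstab n x : Mbar O V π L)) ∈ FnM O K B V π A L (n + 1)
    refine ⟨⟨y, FnL_le O K B V A L hLstab (n + 1) hy⟩, hy, ?_⟩
    have hpsix : (psi O K B V π A L hLstab n x : Mbar O V π L) =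
        (Submodule.comap L.subtype (piSMul O V π L)).mkQ
          (Submodule.inclusion (FnL_le O K B V A L hLstab n) x) := rfl
    rw [hpsix]
    rw [Submodule.mkQ_apply, Submodule.mkQ_apply, Submodule.Quotient.eq]
    have hyx : y - (x : V) = π • (-(z : V)) := by
      have hxe : (x : V) = y + π • z := by simpa [LinearMap.lsmul_apply] using hyw.symm
      rw [hxe, smul_neg]
      abel
    show (y - (x : V)) ∈ piSMul O V π L
    rw [hyx]
    exact ⟨-(z : V), neg_mem ((FnL_le O K B V A L hLstab n) hz), rfl⟩)

lemma JK_pow_succ_le (n : ℕ) : (JK K B) ^ (n + 2) ≤ (JK K B) ^ (n + 1) := by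
  induction n with
  | zero =>
    rw [pow_one, pow_two]
    refine Submodule.mul_le.mpr fun a _ b hb => ?_
    show a * b ∈ Ideal.jacobson (⊥ : Ideal B)
    simpa [smul_eq_mul] using Submodule.smul_mem (Ideal.jacobson (⊥ : Ideal B)) a hb
  | succ n ih =>
    rw [pow_succ, pow_succ (n := n + 1)]
    exact mul_le_mul' ih le_rfl

lemma radV_zero : radV K B V 0 = ⊤ := by
  rw [eq_top_iff]
  intro v _
  refine Submodule.subset_span ⟨1, ?_, v, trivial, (one_smul B v).symm⟩
  rw [pow_zero]
  exact Submodule.one_le.mp le_rfl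

lemma radV_succ_le (n : ℕ) : radV K B V (n + 1) ≤ radV K B V n := by
  cases n with
  | zero => rw [radV_zero]; exact le_top
  | succ n =>
    apply Submodule.span_mono
    rintro y ⟨s, hs, w, hw, rfl⟩
    exact ⟨s, JK_pow_succ_le K B n hs, w, hw, rfl⟩

theorem statement4 (π : O) (hπ : Irreducible π)
    (A : Subalgebra O B) (hAfin : Module.Finite O A) (hAfree : Module.Free O A)
    (hAspan : Submodule.span K (A : Set B) = ⊤)
    (L : Submodule O V) (hLfin : Module.Finite O L) (hLfree : Module.Free O L)
    (hLspan : Submodule.span K (L : Set V) = ⊤)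
    (hLstab : ∀ a ∈ A, ∀ x ∈ L, a • x ∈ L)
    (htight : ∀ n : ℕ, FnL O K B V A L n = radL O K B V L n) :
    ∀ n : ℕ, Function.Bijective (redMap O K B V π A L hLstab n) := by
  intro n
  have hπK : algebraMap O K π ≠ 0 := by
    rw [map_ne_zero_iff _ (IsFractionRing.injective O K)]
    exact hπ.ne_zero
  -- membership in FnL gives membership in radV
  have hFnl_radV : ∀ m : ℕ, ∀ v : V, v ∈ FnL O K B V A L m → v ∈ radV K B V m := by
    intro m v hv
    have : v ∈ radL O K B V L m := (htight m) ▸ hv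
    exact this.2
  -- key lemma for injectivity
  have key : ∀ x : FnL O K B V A L n,
      ((Submodule.comap L.subtype (piSMul O V π L)).mkQ
        (Submodule.inclusion (FnL_le O K B V A L hLstab n) x)) ∈ FnM O K B V π A L (n + 1) →
      (x : V) ∈ FnL O K B V A L (n + 1) ⊔ piSMul O V π (FnL O K B V A L n) := by
    rintro ⟨x, hx⟩ hmem
    obtain ⟨y, hy, hyx⟩ := hmem
    -- hy : (y : V) ∈ FnL (n+1), hyx : mkQ y = mkQ ⟨x, _⟩
    rw [Submodule.mkQ_apply, Submodule.mkQ_apply, Submodule.Quotient.eq] at hyx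
    have hyx' : (y : V) - x ∈ piSMul O V π L := hyx
    obtain ⟨z, hzL, hz⟩ := hyx'
    -- hz : π • z = (y:V) - x
    have hz' : π • z = (y : V) - x := hz
    have hzrad : z ∈ radV K B V n := by
      have h1 : (x : V) ∈ radV K B V n := hFnl_radV n x hx
      have h2 : (y : V) ∈ radV K B V n :=
        radV_succ_le K B V n (hFnl_radV (n + 1) y hy)
      have h3 : (algebraMap O K π) • z ∈ radV K B V n := by
        rw [algebraMap_smul, hz']
        exact sub_mem h2 h1
      have := (radV K B V n).smul_mem ((algebraMap O K π)⁻¹) h3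
      rwa [inv_smul_smul₀ hπK] at this
    have hzFnL : z ∈ FnL O K B V A L n := by
      rw [htight n]
      exact ⟨hzL, hzrad⟩
    refine Submodule.mem_sup.mpr ⟨(y : V), hy, π • (-z), ⟨-z, neg_mem hzFnL, ?_⟩, ?_⟩
    · simp
    · rw [smul_neg, hz']; abel
  constructor
  · -- injectivity
    rw [← LinearMap.ker_eq_bot, eq_bot_iff]
    intro a ha
    obtain ⟨x, rfl⟩ := Submodule.Quotient.mk_surjective _ a
    rw [LinearMap.mem_ker, redMap, Submodule.mapQ_apply, Submodule.Quotient.mk_eq_zero] at ha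
    have hmem : ((Submodule.comap L.subtype (piSMul O V π L)).mkQ
        (Submodule.inclusion (FnL_le O K B V A L hLstab n) x)) ∈ FnM O K B V π A L (n + 1) := ha
    rw [Submodule.mem_bot, Submodule.Quotient.mk_eq_zero]
    exact key x hmem
  · -- surjectivity
    intro c
    obtain ⟨m, rfl⟩ := Submodule.Quotient.mk_surjective _ c
    obtain ⟨x, hx, hxm⟩ := m.2
    refine ⟨Submodule.Quotient.mk ⟨(x : V), hx⟩, ?_⟩
    rw [redMap, Submodule.mapQ_apply]
    congr 1
    apply Subtype.ext
    show (Submodule.comap L.subtype (piSMul O V π L)).mkQ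
      (Submodule.inclusion (FnL_le O K B V A L hLstab n) ⟨(x : V), hx⟩) = (m : Mbar O V π L)
    rw [← hxm]
    rfl

end
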